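/- arXiv:2409.14854 — 2 statements merged into one kernel-verified Lean document; each statement's English description precedes it below -/
import Mathlib

section
/- Let G be a valued group and let f, g ∈ G with f ≠ 1 and g ≠ 1. Then the following four statements are equivalent: f*g⁻¹ ≺ f; f*g⁻¹ ≺ g; g⁻¹*f ≺ f; g⁻¹*f ≺ g. -/
/-!
Write `x = f * g⁻¹`, so that `f = x * g` and `g = x⁻¹ * f`. In a valued group a product is
equivalent to its strictly dominant factor, hence `x ≺ f` and `x ≺ g` each force `f ≍ g`, after
which the two conditions coincide. Conjugation by `f⁻¹` (resp. `g`) turns `f * g⁻¹` into `g⁻¹ * f`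
while fixing `f` (resp. `g`), which gives the remaining equivalences.
-/

variable {G : Type*} [Group G]

/-- `f ≺ g` : strict part of the dominance relation. -/
def vlt (le : G → G → Prop) (f g : G) : Prop := le f g ∧ ¬ le g f

/-- `f ≍ g` : equivalence induced by the dominance relation. -/
def veq (le : G → G → Prop) (f g : G) : Prop := le f g ∧ le g f

/-- A dominance relation on a group `G`, making it a valued group:
a reflexive, transitive, total relation satisfying D1-D4. -/
structure IsValuation (le : G → G → Prop) : Prop where
  refl : ∀ f : G, le f f
  trans : ∀ f g h : G, le f g → le g h → le f h
  total : ∀ f g : G, le f g ∨ le g f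
  d1 : ∀ f : G, f ≠ 1 → vlt le 1 f
  d2 : ∀ f g : G, le (f * g) f ∨ le (f * g) g
  d3 : ∀ f g h : G, le f g → le (h * f * h⁻¹) (h * g * h⁻¹)
  d4 : ∀ f : G, veq le f f⁻¹

namespace IsValuation

variable {le : G → G → Prop}

theorem vlt_congr_right (hv : IsValuation le) {a b c : G} (hbc : veq le b c) :
    vlt le a b ↔ vlt le a c :=
  ⟨fun ⟨hab, hba⟩ => ⟨hv.trans _ _ _ hab hbc.1, fun hca => hba (hv.trans _ _ _ hbc.1 hca)⟩,
   fun ⟨hac, hca⟩ => ⟨hv.trans _ _ _ hac hbc.2, fun hba => hca (hv.trans _ _ _ hbc.2 hba)⟩⟩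

theorem inv_vlt (hv : IsValuation le) {a b : G} (h : vlt le a b) : vlt le a⁻¹ b :=
  ⟨hv.trans _ _ _ (hv.d4 a).2 h.1, fun hba => h.2 (hv.trans _ _ _ hba (hv.d4 a).2)⟩

theorem mul_veq_of_vlt (hv : IsValuation le) {a b : G} (h : vlt le a b) : veq le (a * b) b := by
  constructor
  · rcases hv.d2 a b with hle | hle
    · exact hv.trans _ _ _ hle h.1
    · exact hle
  · have hb := hv.d2 a⁻¹ (a * b)
    rw [inv_mul_cancel_left] at hb
    rcases hb with hle | hle
    · exact absurd (hv.trans _ _ _ hle (hv.d4 a).2) h.2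
    · exact hle

theorem conj_le_conj_iff (hv : IsValuation le) (h x y : G) :
    le (h * x * h⁻¹) (h * y * h⁻¹) ↔ le x y := by
  refine ⟨fun hxy => ?_, hv.d3 x y h⟩
  simpa [mul_assoc] using hv.d3 _ _ h⁻¹ hxy

theorem conj_vlt_conj_iff (hv : IsValuation le) (h x y : G) :
    vlt le (h * x * h⁻¹) (h * y * h⁻¹) ↔ vlt le x y := by
  simp only [vlt, hv.conj_le_conj_iff]

theorem mul_inv_vlt_left_iff_right (hv : IsValuation le) (f g : G) :
    vlt le (f * g⁻¹) f ↔ vlt le (f * g⁻¹) g := by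
  constructor
  · intro h
    have hgf : veq le g f := by simpa using hv.mul_veq_of_vlt (hv.inv_vlt h)
    exact (hv.vlt_congr_right hgf).2 h
  · intro h
    have hfg : veq le f g := by simpa using hv.mul_veq_of_vlt h
    exact (hv.vlt_congr_right hfg).2 h

end IsValuation

theorem sim_tfae_general (le : G → G → Prop) (hv : IsValuation le)
    (f g : G) :
    [vlt le (f * g⁻¹) f, vlt le (f * g⁻¹) g,
     vlt le (g⁻¹ * f) f, vlt le (g⁻¹ * f) g].TFAE := by
  tfae_have 1 ↔ 2 := hv.mul_inv_vlt_left_iff_right f g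
  tfae_have 1 ↔ 3 := by
    simpa [mul_assoc] using (hv.conj_vlt_conj_iff f⁻¹ (f * g⁻¹) f).symm
  tfae_have 2 ↔ 4 := by
    simpa [mul_assoc] using hv.conj_vlt_conj_iff g (g⁻¹ * f) g
  tfae_finish

/-- Proposition 2.23: for nonidentity `f, g`, the four conditions
`f*g⁻¹ ≺ f`, `f*g⁻¹ ≺ g`, `g⁻¹*f ≺ f`, `g⁻¹*f ≺ g` are equivalent. -/
theorem sim_tfae (le : G → G → Prop) (hv : IsValuation le)
    (f g : G) (hf : f ≠ 1) (hg : g ≠ 1) :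
    [vlt le (f * g⁻¹) f, vlt le (f * g⁻¹) g,
     vlt le (g⁻¹ * f) f, vlt le (g⁻¹ * f) g].TFAE :=
  sim_tfae_general le hv f g
end

section
/- Let G be a nearly Abelian c-valued group. Then for every f ∈ G with f ≠ 1, the centralizer C(f) = {g ∈ G : f*g = g*f} is a malnormal subgroup of G: for every g ∈ G with g ∉ C(f), one has C(f) ∩ g*C(f)*g⁻¹ = {1}. (In particular, G is a CSA-group.) -/
variable {G : Type*} [Group G]

/-- A c-dominance relation: a dominance relation moreover satisfying D5 and D6. -/
structure IsCValuation (le : G → G → Prop) extends IsValuation le : Prop where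
  d5 : ∀ f g : G, f ≠ 1 → g ≠ 1 → f * g = g * f → veq le f g
  d6 : ∀ f g : G, f ≠ 1 → g ≠ 1 → veq le f g → vlt le (f⁻¹ * g⁻¹ * f * g) f

/-- A valued group is nearly Abelian if `⁅f,g⁆ ≺ f` and `⁅f,g⁆ ≺ g` for all
nonidentity `f, g`. -/
def NearlyAbelian (le : G → G → Prop) : Prop :=
  ∀ f g : G, f ≠ 1 → g ≠ 1 →
    vlt le (f⁻¹ * g⁻¹ * f * g) f ∧ vlt le (f⁻¹ * g⁻¹ * f * g) g

/-!
Let `x ≠ 1` lie in `C(f) ∩ g C(f) g⁻¹`. By D5, two nonidentity elements that commute with a common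
nonidentity element are `≍`; in a nearly Abelian group this forces every pair `a, b` with `a ≠ 1`
and `[a, b]` commuting with some nonidentity element of `C(a)` to commute, since otherwise
`[a, b] ≍ a` while `[a, b] ≺ a`. Applied to `x, g` with the witness `f` (note
`[x, g] = x⁻¹ (g⁻¹ x g) ∈ C(f)`) this gives `x ∈ C(g)`; applied to `f, g` with the witness `x`
it then gives `g ∈ C(f)`.
-/

theorem inv_mul_inv_mul_mul_eq_one_iff {a b : G} : a⁻¹ * b⁻¹ * a * b = 1 ↔ Commute a b := by
  rw [show a⁻¹ * b⁻¹ * a * b = (b * a)⁻¹ * (a * b) by group, inv_mul_eq_one, eq_comm]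
  rfl

theorem Commute.inv_mul_inv_mul_mul_right {z a b : G} (ha : Commute z a) (hb : Commute z b) :
    Commute z (a⁻¹ * b⁻¹ * a * b) :=
  ((ha.inv_right.mul_right hb.inv_right).mul_right ha).mul_right hb

theorem IsCValuation.le_of_commute_of_commute {le : G → G → Prop} (hv : IsCValuation le)
    {a z c : G} (ha : a ≠ 1) (hz : z ≠ 1) (hc : c ≠ 1) (hza : Commute z a) (hzc : Commute z c) :
    le a c :=
  hv.trans _ _ _ (hv.d5 a z ha hz hza.symm).1 (hv.d5 z c hz hc hzc).1

theorem NearlyAbelian.commute_of_commute_commutator {le : G → G → Prop} (hna : NearlyAbelian le)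
    (hv : IsCValuation le) {a b z : G} (ha : a ≠ 1) (hz : z ≠ 1) (hza : Commute z a)
    (hzc : Commute z (a⁻¹ * b⁻¹ * a * b)) : Commute a b := by
  by_contra hab
  have hb : b ≠ 1 := by
    rintro rfl
    exact hab (Commute.one_right a)
  have hc : a⁻¹ * b⁻¹ * a * b ≠ 1 := mt inv_mul_inv_mul_mul_eq_one_iff.mp hab
  exact (hna a b ha hb).1.2 (hv.le_of_commute_of_commute ha hz hc hza hzc)

-- `g⁻¹ * x * g ∈ C(f)` encodes `x ∈ g C(f) g⁻¹`.
/-- Proposition 7.11: in a nearly Abelian c-valued group, centralizers of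
nonidentity elements are malnormal: if `g ∉ C(f)` then `C(f) ∩ g C(f) g⁻¹ = {1}`.
Here `x ∈ g C(f) g⁻¹` iff `g⁻¹*x*g ∈ C(f)`. -/
theorem centralizer_malnormal (le : G → G → Prop) (hv : IsCValuation le)
    (hna : NearlyAbelian le) (f : G) (hf : f ≠ 1) :
    ∀ g : G, ¬ (f * g = g * f) →
      ∀ x : G, f * x = x * f → f * (g⁻¹ * x * g) = (g⁻¹ * x * g) * f → x = 1 := by
  intro g hfg x hfx hfx'
  by_contra hx
  have hfx : Commute f x := hfx
  have hxg : Commute x g := by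
    refine hna.commute_of_commute_commutator hv hx hf hfx ?_
    rw [show x⁻¹ * g⁻¹ * x * g = x⁻¹ * (g⁻¹ * x * g) by group]
    exact hfx.inv_right.mul_right hfx'
  exact hfg (hna.commute_of_commute_commutator hv hf hx hfx.symm
    (hfx.symm.inv_mul_inv_mul_mul_right hxg))
end
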